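/- For every ε > 0 there exists s ∈ ℂ with Q(s) = 0, s ≠ γ̃_M and γ̃_M − ε < Re(s) < γ̃_M. Consequently, γ̃_M is an accumulation point of the set of real parts of the zeros of Q. -/

import Mathlib

/-!
Write `Q = 1 - 2F` with `F(s) = ∑ₖ exp(-νₖ s)` and `νₖ = √(k(k+2))/2`. The function `F` is
holomorphic on `Re s > 0` and strictly decreasing on the positive reals, so `F - 1/2` has an
isolated zero at `γ̃_M`. On every half-plane `Re s ≥ c > 0`, `F` is uniformly almost periodic in
`Im s`: by simultaneous Dirichlet approximation some `q` makes `q νₖ` nearly integral for the first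
`N` frequencies, so the shift by `2πqi` barely moves the first `N` terms, and the tail is uniformly
small. A Rouché-type argument on a small circle around `γ̃_M` then yields zeros of `F - 1/2` with
`Im s ≠ 0` and `Re s` as close to `γ̃_M` as we like. Such a zero has `Re s < γ̃_M`: otherwise
`Re F(s) ≤ F(Re s) ≤ F(γ̃_M) = 1/2`, and equality forces `cos(νₖ Im s) = 1` for all `k`, making
`ν₂/ν₁ = √(8/3)` rational.
-/

/-- `Q(s) = 1 - 2∑_{k≥1} exp(-s√(k(k+2))/2)`. -/
noncomputable def Qfun (s : ℂ) : ℂ :=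
  1 - 2 * ∑' k : ℕ,
    Complex.exp (-(s * (Real.sqrt (((k : ℝ) + 1) * (((k : ℝ) + 1) + 2)) : ℂ) / 2))

open Complex Real Filter Topology Metric Set

-- Simultaneous Dirichlet approximation, by pigeonhole on the fractional parts of `j * α i`.
theorem exists_nat_forall_abs_mul_sub_lt {ι : Type*} [Fintype ι] (α : ι → ℝ) {M : ℕ}
    (hM : 0 < M) : ∃ q : ℕ, 0 < q ∧ ∀ i, ∃ z : ℤ, |q * α i - z| < 1 / M := by
  have hM' : (0 : ℝ) < M := Nat.cast_pos.2 hM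
  have hmaps : ∀ j : ℕ, (fun i => ⌊Int.fract (j * α i) * M⌋) ∈ pi univ fun _ => Ico 0 (M : ℤ) :=
    fun j i _ => ⟨Int.floor_nonneg.2 (mul_nonneg (Int.fract_nonneg _) hM'.le),
      Int.floor_lt.2 (by exact_mod_cast mul_lt_of_lt_one_left hM' (Int.fract_lt_one _))⟩
  obtain ⟨a, b, hab, heq⟩ :=
    Finite.exists_lt_map_eq_of_forall_mem hmaps (Finite.pi fun _ => finite_Ico _ _)
  refine ⟨b - a, Nat.sub_pos_of_lt hab, fun i => ⟨⌊b * α i⌋ - ⌊a * α i⌋, ?_⟩⟩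
  have hfloor := Int.abs_sub_lt_one_of_floor_eq_floor (congrFun heq i).symm
  rw [← sub_mul, abs_mul, abs_of_pos hM', ← lt_div_iff₀ hM'] at hfloor
  have hdiff : ((b - a : ℕ) : ℝ) * α i - ((⌊b * α i⌋ - ⌊a * α i⌋ : ℤ) : ℝ)
      = Int.fract (b * α i) - Int.fract (a * α i) := by
    push_cast [Nat.cast_sub hab.le, Int.fract]
    ring
  rwa [hdiff]

-- Without a zero, the maximum modulus principle for `1 / g` would give `m ≤ ‖g z₀‖`.
theorem exists_mem_closedBall_eq_zero_of_norm_lt {g : ℂ → ℂ} {z₀ : ℂ} {δ m : ℝ} (hδ : 0 < δ)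
    (hg : DifferentiableOn ℂ g (closedBall z₀ δ)) (hsphere : ∀ z ∈ sphere z₀ δ, m ≤ ‖g z‖)
    (hcenter : ‖g z₀‖ < m) : ∃ z ∈ closedBall z₀ δ, g z = 0 := by
  by_contra! h
  have hm : 0 < m := (norm_nonneg _).trans_lt hcenter
  have hinv : DiffContOnCl ℂ (fun z => (g z)⁻¹) (ball z₀ δ) := by
    refine ⟨(hg.mono ball_subset_closedBall).inv fun z hz => h z (ball_subset_closedBall hz), ?_⟩
    rw [closure_ball z₀ hδ.ne']
    exact hg.continuousOn.inv₀ h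
  have hmax : ‖(g z₀)⁻¹‖ ≤ m⁻¹ := by
    refine Complex.norm_le_of_forall_mem_frontier_norm_le isBounded_ball hinv (fun z hz => ?_)
      (subset_closure (mem_ball_self hδ))
    rw [frontier_ball z₀ hδ.ne'] at hz
    rw [norm_inv]
    exact inv_anti₀ hm (hsphere z hz)
  rw [norm_inv, inv_le_inv₀ (norm_pos_iff.2 (h z₀ (mem_closedBall_self hδ.le))) hm] at hmax
  exact hmax.not_gt hcenter

theorem exists_pos_forall_exists_mem_closedBall_eq_zero {f : ℂ → ℂ} {z₀ : ℂ} {δ : ℝ} (hδ : 0 < δ)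
    (hf : ContinuousOn f (sphere z₀ δ)) (hf_ne : ∀ z ∈ sphere z₀ δ, f z ≠ 0) (hf₀ : f z₀ = 0) :
    ∃ η > 0, ∀ g : ℂ → ℂ, DifferentiableOn ℂ g (closedBall z₀ δ) →
      (∀ z ∈ closedBall z₀ δ, ‖g z - f z‖ < η) → ∃ z ∈ closedBall z₀ δ, g z = 0 := by
  obtain ⟨w, hw, hmin⟩ := (isCompact_sphere z₀ δ).exists_isMinOn
    (NormedSpace.sphere_nonempty.2 hδ.le) hf.norm
  refine ⟨‖f w‖ / 2, by simpa using hf_ne w hw, fun g hg hfg => ?_⟩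
  refine exists_mem_closedBall_eq_zero_of_norm_lt hδ hg (m := ‖f w‖ / 2) (fun z hz => ?_) ?_
  · have hgf := hfg z (sphere_subset_closedBall hz)
    have htri := norm_sub_le (g z) (g z - f z)
    rw [sub_sub_cancel] at htri
    have hwz : ‖f w‖ ≤ ‖f z‖ := hmin hz
    linarith
  · simpa [hf₀] using hfg z₀ (mem_closedBall_self hδ.le)

lemma not_irrational_div_of_cos_eq_one {a b : ℝ} (ha : Real.cos a = 1) (hb : Real.cos b = 1) :
    ¬Irrational (b / a) := by
  obtain ⟨n, rfl⟩ := (cos_eq_one_iff a).1 ha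
  obtain ⟨m, rfl⟩ := (cos_eq_one_iff b).1 hb
  rw [mul_div_mul_right _ _ (by positivity : 2 * π ≠ 0)]
  exact fun h => h ⟨m / n, by push_cast; rfl⟩

lemma norm_cexp_neg_mul_ofReal (s : ℂ) (x : ℝ) : ‖cexp (-(s * x))‖ = rexp (-(s.re * x)) := by
  simp [Complex.norm_exp]

lemma exp_neg_mul_le_exp_neg_mul {x y v : ℝ} (hv : 0 ≤ v) (hxy : x ≤ y) :
    rexp (-(y * v)) ≤ rexp (-(x * v)) := by
  gcongr

lemma norm_cexp_two_pi_mul_I_sub_one_le (x : ℝ) (z : ℤ) :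
    ‖cexp (↑(2 * π * x) * I) - 1‖ ≤ 2 * π * |x - z| := by
  have hper : cexp (↑(2 * π * x) * I) = cexp (I * ↑(2 * π * (x - z))) := by
    rw [← mul_one (cexp (I * _)), ← exp_int_mul_two_pi_mul_I z, ← Complex.exp_add]
    push_cast
    congr 1
    ring
  rw [hper]
  refine norm_exp_I_mul_ofReal_sub_one_le.trans_eq ?_
  rw [norm_mul, Real.norm_of_nonneg (by positivity), Real.norm_eq_abs]

lemma cexp_neg_mul_add_two_pi_mul_I_sub (s : ℂ) (x v : ℝ) :
    cexp (-((s + ↑(2 * π * x) * I) * v)) - cexp (-(s * v)) =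
      cexp (-(s * v)) * (cexp (↑(2 * π * -(x * v)) * I) - 1) := by
  rw [mul_sub, mul_one, ← Complex.exp_add]
  congr 2
  push_cast
  ring

lemma norm_cexp_neg_mul_add_two_pi_mul_I_sub_le {s : ℂ} {c v : ℝ} (hv : 0 ≤ v) (hs : c ≤ s.re)
    (x : ℝ) (z : ℤ) :
    ‖cexp (-((s + ↑(2 * π * x) * I) * v)) - cexp (-(s * v))‖ ≤
      rexp (-(c * v)) * min 2 (2 * π * |x * v - z|) := by
  rw [cexp_neg_mul_add_two_pi_mul_I_sub, norm_mul, norm_cexp_neg_mul_ofReal]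
  gcongr ?_ * ?_
  · exact exp_neg_mul_le_exp_neg_mul hv hs
  · refine le_min ((norm_sub_le _ _).trans ?_)
      ((norm_cexp_two_pi_mul_I_sub_one_le _ (-z)).trans_eq ?_)
    · rw [norm_exp_ofReal_mul_I, norm_one]
      norm_num
    · rw [Int.cast_neg, neg_sub_neg, abs_sub_comm]

noncomputable def expSum (ν : ℕ → ℝ) (s : ℂ) : ℂ := ∑' k, cexp (-(s * ν k))

section ExpSum

variable {ν : ℕ → ℝ}

lemma summable_exp_neg_mul_of_le (hν : ∀ k, 0 ≤ ν k) {x y : ℝ}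
    (hx : Summable fun k => rexp (-(x * ν k))) (hxy : x ≤ y) :
    Summable fun k => rexp (-(y * ν k)) :=
  hx.of_nonneg_of_le (fun _ => (exp_pos _).le) fun k => exp_neg_mul_le_exp_neg_mul (hν k) hxy

lemma summable_cexp_neg_mul {s : ℂ} (hs : Summable fun k => rexp (-(s.re * ν k))) :
    Summable fun k => cexp (-(s * ν k)) :=
  Summable.of_norm (by simpa only [norm_cexp_neg_mul_ofReal] using hs)

lemma differentiableOn_expSum (hν : ∀ k, 0 ≤ ν k) {c : ℝ}
    (hc : Summable fun k => rexp (-(c * ν k))) : DifferentiableOn ℂ (expSum ν) {s | c < s.re} := by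
  refine differentiableOn_tsum_of_summable_norm hc (fun k => ?_)
    (isOpen_lt continuous_const continuous_re) fun k s hs => ?_
  · exact (Complex.differentiable_exp.comp (by fun_prop)).differentiableOn
  · rw [norm_cexp_neg_mul_ofReal]
    exact exp_neg_mul_le_exp_neg_mul (hν k) (le_of_lt hs)

lemma expSum_ofReal (x : ℝ) : expSum ν x = ((∑' k, rexp (-(x * ν k)) : ℝ) : ℂ) := by
  rw [expSum, ofReal_tsum]
  push_cast
  rfl

lemma tsum_exp_neg_mul_lt (hν : ∀ k, 0 ≤ ν k) {j : ℕ} (hj : 0 < ν j) {x y : ℝ}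
    (hx : Summable fun k => rexp (-(x * ν k))) (hxy : x < y) :
    ∑' k, rexp (-(y * ν k)) < ∑' k, rexp (-(x * ν k)) :=
  Summable.tsum_lt_tsum (fun k => exp_neg_mul_le_exp_neg_mul (hν k) hxy.le)
    (exp_lt_exp.2 (by nlinarith)) (summable_exp_neg_mul_of_le hν hx hxy.le) hx

lemma eventually_expSum_ne (hν : ∀ k, 0 ≤ ν k) {j : ℕ} (hj : 0 < ν j) {c x : ℝ}
    (hc : Summable fun k => rexp (-(c * ν k))) (hcx : c < x) :
    ∀ᶠ z in 𝓝[≠] (x : ℂ), expSum ν z ≠ expSum ν x := by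
  have han : AnalyticAt ℂ (fun z => expSum ν z - expSum ν x) x :=
    ((differentiableOn_expSum hν hc).sub_const _).analyticAt
      ((isOpen_lt continuous_const continuous_re).mem_nhds (by simpa using hcx))
  refine (han.eventually_eq_zero_or_eventually_ne_zero.resolve_left fun h => ?_).mono
    fun z hz => sub_ne_zero.1 hz
  obtain ⟨y, hy, hxy⟩ := ((((continuous_ofReal.tendsto x).eventually h).filter_mono
    nhdsWithin_le_nhds).and (self_mem_nhdsWithin : Ioi x ∈ 𝓝[>] x)).exists
  rw [sub_eq_zero, expSum_ofReal, expSum_ofReal, ofReal_inj] at hy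
  exact (tsum_exp_neg_mul_lt hν hj (summable_exp_neg_mul_of_le hν hc hcx.le) hxy).ne hy

theorem exists_almost_period_expSum (hν : ∀ k, 0 ≤ ν k) {c : ℝ}
    (hc : Summable fun k => rexp (-(c * ν k))) {η : ℝ} (hη : 0 < η) :
    ∃ q : ℕ, 0 < q ∧ ∀ s : ℂ, c ≤ s.re → ‖expSum ν (s + ↑(2 * π * q) * I) - expSum ν s‖ ≤ η := by
  set f : ℕ → ℝ := fun k => rexp (-(c * ν k))
  obtain ⟨N, hN⟩ : ∃ N, ∑' k, f (k + N) ≤ η / 4 :=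
    ((tendsto_sum_nat_add f).eventually (ge_mem_nhds (by positivity))).exists
  set S := ∑ k ∈ Finset.range N, f k
  obtain ⟨M, hM⟩ := exists_nat_gt (4 * π * S / η)
  have hM' : 0 < (M : ℝ) :=
    lt_of_le_of_lt (by have : 0 ≤ S := Finset.sum_nonneg fun k _ => (exp_pos _).le; positivity) hM
  obtain ⟨q, hq, happrox⟩ :=
    exists_nat_forall_abs_mul_sub_lt (fun k : Fin N => ν k) (Nat.cast_pos.1 hM')
  refine ⟨q, hq, fun s hs => ?_⟩
  set d : ℕ → ℂ := fun k => cexp (-((s + ↑(2 * π * q) * I) * ν k)) - cexp (-(s * ν k))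
  have hd : ∀ k (z : ℤ), ‖d k‖ ≤ f k * min 2 (2 * π * |q * ν k - z|) :=
    fun k => norm_cexp_neg_mul_add_two_pi_mul_I_sub_le (hν k) hs q
  have hd_two : ∀ k, ‖d k‖ ≤ 2 * f k := fun k => (hd k 0).trans <|
    (mul_le_mul_of_nonneg_left (min_le_left _ _) (exp_pos _).le).trans_eq (mul_comm _ _)
  have hd_small : ∀ k < N, ‖d k‖ ≤ f k * (2 * π / M) := fun k hk => by
    obtain ⟨z, hz⟩ := happrox ⟨k, hk⟩
    refine (hd k z).trans (mul_le_mul_of_nonneg_left ((min_le_right _ _).trans ?_) (exp_pos _).le)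
    rw [← mul_one_div (2 * π)]
    exact mul_le_mul_of_nonneg_left hz.le (by positivity)
  have hsum : Summable fun k => ‖d k‖ :=
    (hc.mul_left 2).of_nonneg_of_le (fun _ => norm_nonneg _) hd_two
  calc ‖expSum ν (s + ↑(2 * π * q) * I) - expSum ν s‖ = ‖∑' k, d k‖ := by
        have hs' : c ≤ (s + ↑(2 * π * q) * I).re := by simpa using hs
        rw [expSum, expSum, ← Summable.tsum_sub
          (summable_cexp_neg_mul (summable_exp_neg_mul_of_le hν hc hs'))
          (summable_cexp_neg_mul (summable_exp_neg_mul_of_le hν hc hs))]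
    _ ≤ ∑' k, ‖d k‖ := norm_tsum_le_tsum_norm hsum
    _ = ∑ k ∈ Finset.range N, ‖d k‖ + ∑' k, ‖d (k + N)‖ := (hsum.sum_add_tsum_nat_add N).symm
    _ ≤ ∑ k ∈ Finset.range N, f k * (2 * π / M) + ∑' k, 2 * f (k + N) := by
        gcongr with k hk
        · exact hd_small k (Finset.mem_range.1 hk)
        · exact (summable_nat_add_iff N).2 hsum
        · exact ((summable_nat_add_iff N).2 hc).mul_left 2
        · exact hd_two _
    _ ≤ η := by
        rw [← Finset.sum_mul, tsum_mul_left]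
        have hS : S * (2 * π / M) ≤ η / 2 := by
          rw [div_lt_iff₀ hη] at hM
          rw [← mul_div_assoc, div_le_iff₀ hM']
          nlinarith
        linarith

lemma re_expSum_lt (hirr : Irrational (ν 1 / ν 0)) {s : ℂ}
    (hs : Summable fun k => rexp (-(s.re * ν k))) (him : s.im ≠ 0) :
    (expSum ν s).re < ∑' k, rexp (-(s.re * ν k)) := by
  have hre : ∀ k, (cexp (-(s * ν k))).re = rexp (-(s.re * ν k)) * Real.cos (s.im * ν k) := by
    intro k
    rw [Complex.exp_re, ← Real.cos_neg]
    simp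
  obtain ⟨j, hj⟩ : ∃ j, Real.cos (s.im * ν j) ≠ 1 := by
    by_contra! h
    refine not_irrational_div_of_cos_eq_one (h 0) (h 1) ?_
    rwa [mul_div_mul_left _ _ him]
  have hsum := summable_cexp_neg_mul hs
  rw [expSum, re_tsum hsum]
  refine Summable.tsum_lt_tsum (i := j) (fun k => ?_) ?_ (reCLM.summable hsum) hs
  · rw [hre]
    exact mul_le_of_le_one_right (exp_pos _).le (Real.cos_le_one _)
  · rw [hre]
    exact mul_lt_of_lt_one_right (exp_pos _) ((Real.cos_le_one _).lt_of_ne hj)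

theorem exists_expSum_eq_im_ne_zero (hν : ∀ k, 0 ≤ ν k) {j : ℕ} (hj : 0 < ν j) {c γ : ℝ}
    (hc : Summable fun k => rexp (-(c * ν k))) (hcγ : c < γ) {ε : ℝ} (hε : 0 < ε) :
    ∃ s : ℂ, expSum ν s = expSum ν γ ∧ s.im ≠ 0 ∧ γ - ε < s.re := by
  set F := expSum ν
  obtain ⟨r, hr, hne⟩ := Metric.eventually_nhds_iff.1
    (eventually_nhdsWithin_iff.1 (eventually_expSum_ne hν hj hc hcγ))
  obtain ⟨δ, hδ, hδε, hδc, hδr, hδ1⟩ : ∃ δ > 0, δ < ε ∧ δ < γ - c ∧ δ < r ∧ δ < 1 := by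
    have hpos : 0 < min (min ε (γ - c)) (min r 1) := by
      have := sub_pos.2 hcγ
      positivity
    refine ⟨min (min ε (γ - c)) (min r 1) / 2, by positivity, ?_, ?_, ?_, ?_⟩ <;>
    linarith [min_le_left (min ε (γ - c)) (min r 1), min_le_right (min ε (γ - c)) (min r 1),
      min_le_left ε (γ - c), min_le_right ε (γ - c), min_le_left r 1, min_le_right r 1]
  have hball : ∀ z ∈ closedBall (γ : ℂ) δ, |z.re - γ| ≤ δ ∧ |z.im| ≤ δ := fun z hz => by
    rw [mem_closedBall_iff_norm] at hz
    exact ⟨by simpa using (abs_re_le_norm _).trans hz, by simpa using (abs_im_le_norm _).trans hz⟩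
  have hmem : ∀ z ∈ closedBall (γ : ℂ) δ, c < z.re := fun z hz => by
    linarith [(abs_le.1 (hball z hz).1).1]
  have hdiff := differentiableOn_expSum hν hc
  obtain ⟨η, hη, hzero⟩ := exists_pos_forall_exists_mem_closedBall_eq_zero
    (f := fun z => F z - F γ) hδ
    ((hdiff.continuousOn.sub continuousOn_const).mono
      fun z hz => hmem z (sphere_subset_closedBall hz))
    (fun z hz => sub_ne_zero.2 <| hne (by rw [mem_sphere.1 hz]; exact hδr) fun h => by
      rw [h, mem_sphere, dist_self] at hz
      exact hδ.ne hz)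
    (sub_self (F γ))
  obtain ⟨q, hq, hper⟩ := exists_almost_period_expSum hν hc (half_pos hη)
  set t : ℝ := 2 * π * q
  have hshift : DifferentiableOn ℂ (fun z => F (z + t * I) - F γ) (closedBall (γ : ℂ) δ) :=
    (hdiff.comp (differentiableOn_id.add_const _) fun z hz => by simpa using hmem z hz).sub_const _
  obtain ⟨z, hz, hz0⟩ := hzero _ hshift fun z hz => by
    simp only [sub_sub_sub_cancel_right]
    exact (hper z (hmem z hz).le).trans_lt (half_lt_self hη)
  refine ⟨z + t * I, sub_eq_zero.1 hz0, ?_, ?_⟩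
  · have ht : 1 < t := by
      have := Real.pi_gt_three
      have : (1 : ℝ) ≤ q := Nat.one_le_cast.2 hq
      nlinarith
    simp only [add_im, mul_im, ofReal_re, I_im, ofReal_im, I_re]
    linarith [(abs_le.1 (hball z hz).2).1]
  · simp only [add_re, mul_re, ofReal_re, I_im, ofReal_im, I_re]
    linarith [(abs_le.1 (hball z hz).1).1]

theorem exists_expSum_eq_re_mem_Ioo (hν : ∀ k, 0 ≤ ν k) (hirr : Irrational (ν 1 / ν 0)) {c γ : ℝ}
    (hc : Summable fun k => rexp (-(c * ν k))) (hcγ : c < γ) {ε : ℝ} (hε : 0 < ε) :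
    ∃ s : ℂ, expSum ν s = expSum ν γ ∧ s.im ≠ 0 ∧ s.re ∈ Ioo (γ - ε) γ := by
  have hν₀ : 0 < ν 0 := (hν 0).lt_of_ne fun h => by simp [← h] at hirr
  obtain ⟨s, hs, him, hre⟩ := exists_expSum_eq_im_ne_zero hν hν₀ hc hcγ hε
  refine ⟨s, hs, him, hre, lt_of_not_ge fun hγs => ?_⟩
  have hlt := re_expSum_lt hirr (summable_exp_neg_mul_of_le hν hc (hcγ.le.trans hγs)) him
  have hle : ∑' k, rexp (-(s.re * ν k)) ≤ ∑' k, rexp (-(γ * ν k)) := by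
    rcases hγs.eq_or_lt with h | h
    · rw [h]
    · exact (tsum_exp_neg_mul_lt hν hν₀ (summable_exp_neg_mul_of_le hν hc hcγ.le) h).le
  rw [hs, expSum_ofReal, ofReal_re] at hlt
  exact hlt.not_ge hle

end ExpSum

-- `qFreq k` is the paper's frequency `ν_{k+1}`, since the sum in `Qfun` is indexed from `0`.
noncomputable def qFreq (k : ℕ) : ℝ := √(((k : ℝ) + 1) * (((k : ℝ) + 1) + 2)) / 2

lemma Qfun_eq_one_sub_two_mul_expSum (s : ℂ) : Qfun s = 1 - 2 * expSum qFreq s := by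
  simp only [Qfun, expSum, qFreq, ofReal_div, ofReal_ofNat, mul_div_assoc]

lemma le_qFreq (k : ℕ) : ((k : ℝ) + 1) / 2 ≤ qFreq k := by
  refine div_le_div_of_nonneg_right (Real.le_sqrt_of_sq_le ?_) zero_le_two
  nlinarith [k.cast_nonneg (α := ℝ)]

lemma qFreq_nonneg (k : ℕ) : 0 ≤ qFreq k := by
  unfold qFreq
  positivity

lemma summable_exp_neg_mul_qFreq {c : ℝ} (hc : 0 < c) :
    Summable fun k => rexp (-(c * qFreq k)) := by
  have hgeom := (summable_geometric_of_lt_one (exp_pos (-(c / 2))).le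
    (exp_lt_one_iff.2 (by linarith))).mul_left (rexp (-(c / 2)))
  refine hgeom.of_nonneg_of_le (fun _ => (exp_pos _).le) fun k => ?_
  rw [← pow_succ', ← Real.exp_nat_mul, exp_le_exp]
  have := le_qFreq k
  push_cast
  nlinarith

lemma irrational_qFreq_one_div_qFreq_zero : Irrational (qFreq 1 / qFreq 0) := by
  have h : qFreq 1 / qFreq 0 = √(24 : ℕ) / (3 : ℕ) := by
    simp only [qFreq]
    rw [div_div_div_cancel_right₀ two_ne_zero, div_eq_div_iff (by positivity) (by positivity)]
    push_cast
    norm_num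
    rw [show (24 : ℝ) = 8 * 3 by norm_num, Real.sqrt_mul (by norm_num), mul_assoc,
      Real.mul_self_sqrt (by norm_num)]
  rw [h, irrational_div_natCast_iff, irrational_sqrt_natCast_iff]
  exact ⟨by norm_num, fun ⟨r, hr⟩ =>
    Nat.not_exists_sq (m := 4) (by norm_num) (by norm_num) ⟨r, hr.symm⟩⟩

/-- if `γ̃_M` is the unique positive real with
`∑_{k≥1} exp(-γ̃_M√(k(k+2))/2) = 1/2`, then for every `ε > 0` there is a zero `s` of `Q`
with `s ≠ γ̃_M` and `γ̃_M - ε < Re(s) < γ̃_M`; hence `γ̃_M` is an accumulation point of the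
real parts of the zeros of `Q`. -/
theorem stmt_15 (γ : ℝ) (hγpos : 0 < γ)
    (hγ : ∑' k : ℕ,
        Real.exp (-(γ * Real.sqrt (((k : ℝ) + 1) * (((k : ℝ) + 1) + 2)) / 2)) = 1 / 2)
    (ε : ℝ) (hε : 0 < ε) :
    ∃ s : ℂ, Qfun s = 0 ∧ s ≠ (γ : ℂ) ∧ γ - ε < s.re ∧ s.re < γ := by
  have hγ' : expSum qFreq γ = 1 / 2 := by
    rw [expSum_ofReal]
    simp only [qFreq, ← mul_div_assoc, hγ]
    norm_num
  obtain ⟨s, hs, him, hlt, hgt⟩ := exists_expSum_eq_re_mem_Ioo qFreq_nonneg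
    irrational_qFreq_one_div_qFreq_zero (summable_exp_neg_mul_qFreq (half_pos hγpos))
    (half_lt_self hγpos) hε
  refine ⟨s, ?_, fun h => him (by simp [h]), hlt, hgt⟩
  rw [Qfun_eq_one_sub_two_mul_expSum, hs, hγ']
  norm_num
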